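/- If f is a transcendental meromorphic map in the Speiser class 𝒮 (i.e., Sing(f) is finite), then the set of points z ∈ ℂ that are not Good Pressure Starting (GPS) points has Hausdorff dimension zero. -/

import Mathlib

open Filter Set Topology OnePoint

/-- Spherical (chordal-angular) distance on the Riemann sphere `OnePoint ℂ`. -/
noncomputable def sphDist (u v : OnePoint ℂ) : ℝ :=
  Option.elim u
    (Option.elim v 0 fun w => 2 * Real.arctan (1 / ‖w‖))
    fun z => Option.elim v (2 * Real.arctan (1 / ‖z‖))
      fun w => 2 * Real.arctan (‖z - w‖ / ‖1 + (starRingEnd ℂ) z * w‖)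

/-- Spherical distance from a point to a set. -/
noncomputable def sphDistSet (u : OnePoint ℂ) (A : Set (OnePoint ℂ)) : ℝ :=
  sInf (sphDist u '' A)

/-- Spherical diameter of a set. -/
noncomputable def sphDiam (A : Set (OnePoint ℂ)) : ℝ :=
  sSup {d : ℝ | ∃ x ∈ A, ∃ y ∈ A, d = sphDist x y}

/-- Spherical derivative of a holomorphic map. -/
noncomputable def sphDeriv (f : ℂ → ℂ) (z : ℂ) : ℝ :=
  (1 + ‖z‖ ^ 2) * ‖deriv f z‖ / (1 + ‖f z‖ ^ 2)

/-- The set of singular values of `f⁻¹` (critical and asymptotic values): `a` is *not*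
singular iff every branch of `f⁻¹` extends holomorphically over a ball around `a`. -/
def SingularValues (f : ℂ → ℂ) : Set ℂ :=
  {a | ∀ r > 0, ¬ ∀ w : ℂ, f w ∈ Metric.ball a r →
      ∃ g : ℂ → ℂ, AnalyticOnNhd ℂ g (Metric.ball a r) ∧
        Set.EqOn (f ∘ g) id (Metric.ball a r) ∧ g (f w) = w}

/-- `P_n(f) = ⋃_{k<n} f^k(Sing(f))`. -/
def Pn (f : ℂ → ℂ) (n : ℕ) : Set ℂ := ⋃ k < n, f^[k] '' SingularValues f

/-- The post-singular set `P(f)`. -/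
def PostSing (f : ℂ → ℂ) : Set ℂ := ⋃ k, f^[k] '' SingularValues f

/-- `z` is a Good Pressure Starting point: `ln d(z, P_n(f)) = o(n)`. -/
def GPS (f : ℂ → ℂ) (z : ℂ) : Prop :=
  Tendsto (fun n : ℕ =>
      Real.log (sphDistSet z ((fun w : ℂ => (w : OnePoint ℂ)) '' Pn f n)) / n)
    atTop (nhds 0)

/-- Equicontinuity (w.r.t. the spherical metric) of the family of iterates at `z`. -/
def EquicontAt (f : ℂ → ℂ) (z : ℂ) : Prop :=
  ∃ δ > 0, ∀ ε > 0, ∃ δ' > 0, δ' ≤ δ ∧ ∀ w : ℂ, sphDist w z < δ' →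
    ∀ n : ℕ, sphDist (f^[n] w) (f^[n] z) < ε

/-- The Julia set: points where the family of iterates is not equicontinuous on any
neighbourhood (w.r.t. the spherical metric). -/
def JuliaSet (f : ℂ → ℂ) : Set ℂ := {z | ¬ EquicontAt f z}

/-- `f` is a transcendental meromorphic function on `ℂ` (not rational). -/
def TransMeromorphic (f : ℂ → ℂ) : Prop :=
  MeromorphicOn f Set.univ ∧
    ¬ ∃ p q : Polynomial ℂ, ∀ z : ℂ, Polynomial.eval z q ≠ 0 →
      f z = Polynomial.eval z p / Polynomial.eval z q

/-- `S_n(t,z) = Σ_{w ∈ f^{-n}(z)} |(f^n)^*(w)|^{-t}` (valued in `ℝ≥0∞`). -/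
noncomputable def Sn (f : ℂ → ℂ) (n : ℕ) (t : ℝ) (z : ℂ) : ENNReal :=
  ∑' w : ↥(f^[n] ⁻¹' {z}), ENNReal.ofReal (sphDeriv f^[n] w.1 ^ (-t))

/-! `P_n(f)` has at most `q n` points, `q = #Sing(f)`. If `z` is not GPS, then `d(z, P_n(f)) < θ^n`
for infinitely many `n` and some `θ = e^{-1/(m+1)}`. Spherical and Euclidean distance being
comparable near `z`, `z` then lies in infinitely many of the unions of `q n` Euclidean balls of
radius `C θ^n` around `P_n(f)`. That limsup set is `μH[d]`-null for every `d > 0` because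
`∑ q n (C θ^n)^d < ∞`, and countably many choices of `m` and `C` cover all non-GPS points except
the antipodes `-1/p̄` of post-singular points `p`, where the formula for `sphDist` degenerates
to `0`. -/

open Filter Set Topology MeasureTheory Metric Real
open scoped NNReal ENNReal Finset

theorem hausdorffMeasure_limsup_iUnion_eball_eq_zero {X : Type*} [EMetricSpace X]
    [MeasurableSpace X] [BorelSpace X] {d : ℝ} (hd : 0 ≤ d) (F : ℕ → Finset X)
    {r : ℕ → ℝ≥0∞} (hr : Tendsto r atTop (𝓝 0)) (hr_anti : Antitone r)
    (hsum : ∑' n, #(F n) * (2 * r n) ^ d ≠ ⊤) :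
    μH[d] (limsup (fun n => ⋃ x ∈ F n, eball x (r n)) atTop) = 0 := by
  set t : ∀ N : ℕ, (Σ n, F (n + N)) → Set X := fun N i => eball i.2.1 (r (i.1 + N))
  have h2r : Tendsto (fun N => 2 * r N) atTop (𝓝 0) := by
    simpa using ENNReal.Tendsto.const_mul hr (Or.inr ENNReal.ofNat_ne_top)
  have hdiam : ∀ N i, ediam (t N i) ≤ 2 * r N := fun N i =>
    ediam_eball_le.trans (by gcongr; exact hr_anti (Nat.le_add_left N i.1))
  have hcover : ∀ N, limsup (fun n => ⋃ x ∈ F n, eball x (r n)) atTop ⊆ ⋃ i, t N i := by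
    intro N z hz
    obtain ⟨n, hNn, hzn⟩ := (frequently_atTop.1 (mem_limsup_iff_frequently_mem.1 hz)) N
    obtain ⟨k, rfl⟩ := Nat.exists_eq_add_of_le' hNn
    obtain ⟨x, hx, hzx⟩ := mem_iUnion₂.1 hzn
    exact mem_iUnion.2 ⟨⟨k, x, hx⟩, hzx⟩
  have htail : ∀ N, ∑' i, ediam (t N i) ^ d ≤ ∑' n, #(F (n + N)) * (2 * r (n + N)) ^ d := by
    intro N
    rw [ENNReal.tsum_sigma']
    refine ENNReal.tsum_le_tsum fun n => ?_
    calc ∑' x : F (n + N), ediam (t N ⟨n, x⟩) ^ d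
        ≤ ∑' _ : F (n + N), (2 * r (n + N)) ^ d :=
          ENNReal.tsum_le_tsum fun x => ENNReal.rpow_le_rpow ediam_eball_le hd
      _ = #(F (n + N)) * (2 * r (n + N)) ^ d := by simp
  refine le_antisymm ?_ zero_le
  calc μH[d] (limsup (fun n => ⋃ x ∈ F n, eball x (r n)) atTop)
      ≤ liminf (fun N => ∑' i, ediam (t N i) ^ d) atTop :=
        Measure.hausdorffMeasure_le_liminf_tsum d _ _ h2r t (Eventually.of_forall hdiam)
          (Eventually.of_forall hcover)
    _ ≤ liminf (fun N => ∑' n, #(F (n + N)) * (2 * r (n + N)) ^ d) atTop :=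
        liminf_le_liminf (Eventually.of_forall htail)
    _ = 0 := (ENNReal.tendsto_sum_nat_add _ hsum).liminf_eq

theorem summable_linear_mul_rpow_geometric {q : ℕ} {c θ d : ℝ} (hc : 0 ≤ c) (hθ0 : 0 ≤ θ)
    (hθ1 : θ < 1) (hd : 0 < d) :
    Summable fun n : ℕ => (q * n : ℝ) * (2 * (c * θ ^ n)) ^ d := by
  have hρ : θ ^ d < 1 := Real.rpow_lt_one hθ0 hθ1 hd
  have key : ∀ n : ℕ,
      (q * n : ℝ) * (2 * (c * θ ^ n)) ^ d = q * (2 * c) ^ d * (n ^ 1 * (θ ^ d) ^ n) := by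
    intro n
    rw [← mul_assoc, Real.mul_rpow (by positivity) (by positivity), ← Real.rpow_natCast θ n,
      ← Real.rpow_mul hθ0, mul_comm (n : ℝ) d, Real.rpow_mul hθ0, Real.rpow_natCast]
    ring
  simp_rw [key]
  exact (summable_pow_mul_geometric_of_norm_lt_one (R := ℝ) 1
    (by rwa [Real.norm_of_nonneg (by positivity)])).mul_left _

theorem dimH_limsup_iUnion_ball_eq_zero {X : Type*} [MetricSpace X] (F : ℕ → Finset X) {q : ℕ}
    (hF : ∀ n, #(F n) ≤ q * n) {c θ : ℝ} (hc : 0 ≤ c) (hθ0 : 0 ≤ θ) (hθ1 : θ < 1) :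
    dimH (limsup (fun n => ⋃ x ∈ F n, ball x (c * θ ^ n)) atTop) = 0 := by
  borelize X
  refine le_antisymm (ENNReal.le_of_forall_pos_le_add fun d hd _ => ?_) zero_le
  rw [zero_add]
  refine dimH_le_of_hausdorffMeasure_ne_top (ne_of_eq_of_ne ?_ ENNReal.zero_ne_top)
  simp_rw [← eball_ofReal]
  refine hausdorffMeasure_limsup_iUnion_eball_eq_zero d.coe_nonneg F ?_ ?_ ?_
  · simpa using ENNReal.tendsto_ofReal
      ((tendsto_pow_atTop_nhds_zero_of_lt_one hθ0 hθ1).const_mul c)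
  · exact fun m n hmn => ENNReal.ofReal_le_ofReal
      (mul_le_mul_of_nonneg_left (pow_le_pow_of_le_one hθ0 hθ1.le hmn) hc)
  · have hterm : ∀ n : ℕ, (#(F n) : ℝ≥0∞) * (2 * ENNReal.ofReal (c * θ ^ n)) ^ (d : ℝ)
        ≤ ENNReal.ofReal ((q * n : ℝ) * (2 * (c * θ ^ n)) ^ (d : ℝ)) := by
      intro n
      rw [ENNReal.ofReal_mul (by positivity : (0 : ℝ) ≤ q * n),
        ← ENNReal.ofReal_rpow_of_nonneg (by positivity : (0 : ℝ) ≤ 2 * (c * θ ^ n))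
          d.coe_nonneg, ENNReal.ofReal_mul zero_le_two, ENNReal.ofReal_ofNat]
      gcongr
      exact_mod_cast hF n
    refine ne_top_of_le_ne_top ?_ (ENNReal.tsum_le_tsum hterm)
    rw [← ENNReal.ofReal_tsum_of_nonneg (fun n => by positivity)
      (summable_linear_mul_rpow_geometric hc hθ0 hθ1 (NNReal.coe_pos.2 hd))]
    exact ENNReal.ofReal_ne_top

theorem Real.tan_le_two_mul {x : ℝ} (h0 : 0 ≤ x) (h1 : x ≤ 1) : tan x ≤ 2 * x := by
  have hcos : 1 / 2 ≤ cos x := by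
    nlinarith [one_sub_sq_div_two_le_cos (x := x)]
  rw [tan_eq_sin_div_cos, div_le_iff₀ (by linarith)]
  nlinarith [sin_le h0]

theorem Real.lt_two_mul_of_arctan_lt {y x : ℝ} (h0 : 0 ≤ x) (h1 : x ≤ 1) (h : arctan y < x) :
    y < 2 * x := by
  have hx : x < π / 2 := by linarith [pi_gt_three]
  calc y = tan (arctan y) := (tan_arctan y).symm
    _ < tan x := tan_lt_tan_of_lt_of_lt_pi_div_two (neg_pi_div_two_lt_arctan y) hx h
    _ ≤ 2 * x := tan_le_two_mul h0 h1

theorem exp_neg_one_div_succ_lt_one (m : ℕ) : exp (-1 / (m + 1)) < 1 :=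
  exp_lt_one_iff.2 (by rw [neg_div]; exact neg_neg_of_pos (by positivity))

theorem sphDist_coe_coe (z w : ℂ) :
    sphDist z w = 2 * arctan (‖z - w‖ / ‖1 + (starRingEnd ℂ) z * w‖) := rfl

theorem sphDist_nonneg (u v : OnePoint ℂ) : 0 ≤ sphDist u v := by
  cases u <;> cases v <;> dsimp only [sphDist, Option.elim] <;> positivity

theorem sphDist_lt_pi (u v : OnePoint ℂ) : sphDist u v < π := by
  cases u <;> cases v <;> dsimp only [sphDist, Option.elim]
  · exact pi_pos
  all_goals exact (mul_lt_mul_of_pos_left (arctan_lt_pi_div_two _) two_pos).trans_eq (by ring)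

theorem sphDistSet_nonneg (u : OnePoint ℂ) (A : Set (OnePoint ℂ)) : 0 ≤ sphDistSet u A :=
  Real.sInf_nonneg (by rintro _ ⟨v, -, rfl⟩; exact sphDist_nonneg u v)

theorem sphDistSet_le_pi (u : OnePoint ℂ) (A : Set (OnePoint ℂ)) : sphDistSet u A ≤ π := by
  rcases A.eq_empty_or_nonempty with rfl | ⟨v, hv⟩
  · simp [sphDistSet, pi_pos.le]
  · refine (csInf_le ?_ (mem_image_of_mem _ hv)).trans (sphDist_lt_pi u v).le
    exact ⟨0, by rintro _ ⟨w, -, rfl⟩; exact sphDist_nonneg u w⟩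

theorem exists_sphDist_lt_of_sphDistSet_lt {u : OnePoint ℂ} {A : Set (OnePoint ℂ)} {t : ℝ}
    (hpos : 0 < sphDistSet u A) (h : sphDistSet u A < t) : ∃ v ∈ A, sphDist u v < t := by
  have hA : A.Nonempty := by
    refine nonempty_iff_ne_empty.2 fun hA => hpos.ne' ?_
    simp [sphDistSet, hA]
  obtain ⟨_, ⟨v, hv, rfl⟩, hlt⟩ := exists_lt_of_csInf_lt (hA.image _) h
  exact ⟨v, hv, hlt⟩

theorem one_add_conj_mul_ne_zero {z p : ℂ} (h : z ≠ -(starRingEnd ℂ p)⁻¹) :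
    1 + starRingEnd ℂ z * p ≠ 0 := by
  contrapose! h
  have hp : starRingEnd ℂ p ≠ 0 := by
    rintro hp
    simp_all
  have h' : 1 + z * starRingEnd ℂ p = 0 := by simpa using congrArg (starRingEnd ℂ) h
  field_simp
  linear_combination h'

theorem norm_sub_le_of_ratio_mul_norm_le {z p : ℂ} (hp : 1 + starRingEnd ℂ z * p ≠ 0)
    (hz : ‖z - p‖ / ‖1 + starRingEnd ℂ z * p‖ * ‖z‖ ≤ 1 / 2) :
    ‖z - p‖ ≤ 2 * (1 + ‖z‖ ^ 2) * (‖z - p‖ / ‖1 + starRingEnd ℂ z * p‖) := by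
  set ρ := ‖z - p‖ / ‖1 + starRingEnd ℂ z * p‖
  have hρ : 0 ≤ ρ := by positivity
  have hzp : ‖z - p‖ = ρ * ‖1 + starRingEnd ℂ z * p‖ :=
    (div_mul_cancel₀ _ (norm_ne_zero_iff.2 hp)).symm
  have hden : ‖1 + starRingEnd ℂ z * p‖ ≤ 1 + ‖z‖ * (‖z‖ + ‖z - p‖) := by
    calc ‖1 + starRingEnd ℂ z * p‖ ≤ 1 + ‖z‖ * ‖p‖ := by
          simpa using norm_add_le 1 (starRingEnd ℂ z * p)
      _ ≤ 1 + ‖z‖ * (‖z‖ + ‖z - p‖) := by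
          gcongr
          simpa using norm_sub_le z (z - p)
  nlinarith [mul_le_mul_of_nonneg_left hden hρ, norm_nonneg (z - p)]

theorem norm_sub_lt_of_sphDist_lt {z p : ℂ} {t : ℝ} (hp : 1 + starRingEnd ℂ z * p ≠ 0)
    (ht : t ≤ 2) (htz : t * ‖z‖ ≤ 1 / 2) (h : sphDist z p < t) :
    ‖z - p‖ < 2 * (1 + ‖z‖ ^ 2) * t := by
  set ρ := ‖z - p‖ / ‖1 + starRingEnd ℂ z * p‖
  have hρt : ρ < t := by
    have h0 : 0 ≤ t / 2 := by linarith [sphDist_nonneg z p]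
    rw [sphDist_coe_coe] at h
    linarith [Real.lt_two_mul_of_arctan_lt h0 (by linarith) (by linarith : arctan ρ < t / 2)]
  have hρz : ρ * ‖z‖ ≤ 1 / 2 := by nlinarith [norm_nonneg z]
  calc ‖z - p‖ ≤ 2 * (1 + ‖z‖ ^ 2) * ρ := norm_sub_le_of_ratio_mul_norm_le hp hρz
    _ < 2 * (1 + ‖z‖ ^ 2) * t := by gcongr

theorem exists_frequently_lt_exp_pow_of_not_tendsto {a : ℕ → ℝ} {B : ℝ} (h0 : ∀ n, 0 ≤ a n)
    (hB : ∀ n, a n ≤ B) (h : ¬ Tendsto (fun n : ℕ => log (a n) / n) atTop (𝓝 0)) :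
    ∃ m : ℕ, ∃ᶠ n in atTop, 0 < a n ∧ a n < exp (-1 / (m + 1)) ^ n := by
  obtain ⟨ε, hε, hfreq⟩ : ∃ ε > 0, ∃ᶠ n in atTop, ε ≤ |log (a n)| / n := by
    simpa [Metric.tendsto_atTop, frequently_atTop, Real.dist_eq] using h
  have hlog : ∀ n, log (a n) ≤ |log B| := fun n => by
    rcases (h0 n).eq_or_lt with hn | hn
    · simp [← hn]
    · exact (log_le_log hn (hB n)).trans (le_abs_self _)
  have hupper : ∀ᶠ n : ℕ in atTop, log (a n) / n < ε := by
    filter_upwards [(tendsto_const_div_atTop_nhds_zero_nat |log B|).eventually_lt_const hε]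
      with n hn
    exact (div_le_div_of_nonneg_right (hlog n) n.cast_nonneg).trans_lt hn
  obtain ⟨m, hm⟩ := exists_nat_one_div_lt hε
  refine ⟨m, (hfreq.and_eventually (hupper.and (eventually_gt_atTop 0))).mono ?_⟩
  rintro n ⟨hlow, hup, hn⟩
  have hn' : (0 : ℝ) < n := Nat.cast_pos.2 hn
  have hlt : log (a n) < n * (-1 / (m + 1)) := by
    rw [div_lt_iff₀ hn'] at hup
    rw [le_div_iff₀ hn'] at hlow
    have : (n : ℝ) * (1 / (m + 1)) < n * ε := mul_lt_mul_of_pos_left hm hn'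
    have : (n : ℝ) * (-1 / (m + 1)) = -(n * (1 / (m + 1))) := by ring
    rcases abs_cases (log (a n)) with ⟨habs, -⟩ | ⟨habs, -⟩ <;> linarith
  have hpos : 0 < a n := (h0 n).lt_of_ne fun h => by
    rw [← h, log_zero, abs_zero, zero_div] at hlow
    linarith
  refine ⟨hpos, ?_⟩
  rw [← exp_nat_mul, ← exp_log hpos]
  exact exp_lt_exp.2 hlt

theorem Pn_subset_PostSing (f : ℂ → ℂ) (n : ℕ) : Pn f n ⊆ PostSing f :=
  iUnion₂_subset fun k _ => subset_iUnion (fun k => f^[k] '' SingularValues f) k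

theorem PostSing_countable {f : ℂ → ℂ} (hS : (SingularValues f).Finite) :
    (PostSing f).Countable :=
  countable_iUnion fun k => (hS.image f^[k]).countable

theorem Pn_eq_coe_biUnion {f : ℂ → ℂ} (hS : (SingularValues f).Finite) (n : ℕ) :
    Pn f n = ↑((Finset.range n).biUnion fun k => hS.toFinset.image f^[k]) := by
  ext; simp [Pn]

theorem Finset.card_biUnion_range_image_iterate_le {α : Type*} [DecidableEq α] (g : α → α)
    (s : Finset α) (n : ℕ) : #((Finset.range n).biUnion fun k => s.image g^[k]) ≤ #s * n := by
  calc #((Finset.range n).biUnion fun k => s.image g^[k])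
        ≤ ∑ k ∈ Finset.range n, #(s.image g^[k]) := Finset.card_biUnion_le
    _ ≤ ∑ _ ∈ Finset.range n, #s := Finset.sum_le_sum fun k _ => Finset.card_image_le
    _ = #s * n := by simp [mul_comm]

theorem mem_limsup_of_not_GPS {f : ℂ → ℂ} {z : ℂ} (hz : ¬ GPS f z)
    (hzP : ∀ p ∈ PostSing f, z ≠ -(starRingEnd ℂ p)⁻¹) :
    ∃ m R : ℕ, z ∈ limsup (fun n : ℕ =>
      ⋃ p ∈ Pn f n, ball p (2 * (1 + R ^ 2) * exp (-1 / (m + 1)) ^ n)) atTop := by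
  obtain ⟨m, hm⟩ := exists_frequently_lt_exp_pow_of_not_tendsto
    (fun n => sphDistSet_nonneg _ _) (fun n => sphDistSet_le_pi _ _) hz
  set θ := exp (-1 / (m + 1))
  have hθ0 : 0 < θ := exp_pos _
  have hθ1 : θ < 1 := exp_neg_one_div_succ_lt_one m
  have hsmall : ∀ᶠ n : ℕ in atTop, θ ^ n * ‖z‖ ≤ 1 / 2 :=
    ((tendsto_pow_atTop_nhds_zero_of_lt_one hθ0.le hθ1).mul_const ‖z‖).eventually_le_const
      (by simp)
  refine ⟨m, ⌈‖z‖⌉₊, mem_limsup_iff_frequently_mem.2 ((hm.and_eventually hsmall).mono ?_)⟩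
  rintro n ⟨⟨hpos, hlt⟩, hn⟩
  obtain ⟨_, ⟨p, hp, rfl⟩, hzp⟩ := exists_sphDist_lt_of_sphDistSet_lt hpos hlt
  refine mem_iUnion₂.2 ⟨p, hp, ?_⟩
  have hθn : θ ^ n ≤ 2 := (pow_le_one₀ hθ0.le hθ1.le).trans one_le_two
  have hz : ‖z‖ ≤ ⌈‖z‖⌉₊ := Nat.le_ceil _
  calc dist z p = ‖z - p‖ := dist_eq_norm z p
    _ < 2 * (1 + ‖z‖ ^ 2) * θ ^ n := norm_sub_lt_of_sphDist_lt
        (one_add_conj_mul_ne_zero (hzP p (Pn_subset_PostSing f n hp))) hθn hn hzp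
    _ ≤ 2 * (1 + ⌈‖z‖⌉₊ ^ 2) * θ ^ n := by gcongr

theorem stmt_11_general (f : ℂ → ℂ)
    (hS : (SingularValues f).Finite) :
    dimH {z : ℂ | ¬ GPS f z} = 0 := by
  set F : ℕ → Finset ℂ := fun n => (Finset.range n).biUnion fun k => hS.toFinset.image f^[k]
  set antipodes := (fun p : ℂ => -(starRingEnd ℂ p)⁻¹) '' PostSing f
  have hsub : {z : ℂ | ¬ GPS f z} ⊆ antipodes ∪ ⋃ (m : ℕ) (R : ℕ), limsup (fun n : ℕ =>
      ⋃ p ∈ F n, ball p (2 * (1 + R ^ 2) * exp (-1 / (m + 1)) ^ n)) atTop := by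
    intro z hz
    by_cases hzP : z ∈ antipodes
    · exact Or.inl hzP
    obtain ⟨m, R, hmR⟩ := mem_limsup_of_not_GPS hz fun p hp h => hzP ⟨p, hp, h.symm⟩
    simp only [Pn_eq_coe_biUnion hS, Finset.mem_coe] at hmR
    exact Or.inr (mem_iUnion₂.2 ⟨m, R, hmR⟩)
  refine le_antisymm ((dimH_mono hsub).trans ?_) zero_le
  rw [dimH_union, dimH_countable ((PostSing_countable hS).image _), dimH_iUnion]
  simp only [dimH_iUnion, max_le_iff, le_refl, true_and, iSup_le_iff]
  intro m R
  exact (dimH_limsup_iUnion_ball_eq_zero F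
    (fun n => Finset.card_biUnion_range_image_iterate_le f _ n) (by positivity) (exp_pos _).le
    (exp_neg_one_div_succ_lt_one m)).le

/-- For a transcendental meromorphic map in the Speiser class `𝒮` (finitely many singular
values), the set of non-GPS points has Hausdorff dimension zero. -/
theorem stmt_11 (f : ℂ → ℂ) (hf : TransMeromorphic f)
    (hS : (SingularValues f).Finite) :
    dimH {z : ℂ | ¬ GPS f z} = 0 :=
  stmt_11_general f hS
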